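/- (Two-field noncommutative Faraday/Ampère-type identities from the Bianchi identity.) Let B be a unital associative ℂ-algebra with four pairwise commuting ℂ-linear derivations ∂₀,…,∂₃, and let (φ^e, A^e) and (φ^m, A^m) be arbitrary pairs of a scalar and a triple of elements of B. With the fields defined below, ∇×D^e + ∂₀H^e = −j and ∇×H^m + ∂₀D^m = −j, where −j := i[φ^m,B^e] + i[φ^e,E^m] − i(E^e×A^m + A^m×E^e + B^m×A^e + A^e×B^m), with [a,X] := (aX_k − X_ka)_k componentwise. In particular both equations hold for every pair of gauge potentials. -/

import Mathlib

noncomputable section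

namespace NC

variable {B : Type*} [Ring B] [Algebra ℂ B]

/-- A ℂ-linear derivation of the (possibly noncommutative) ℂ-algebra `B`,
given as a plain function together with its defining properties. -/
structure IsDer (δ : B → B) : Prop where
  map_add : ∀ a b : B, δ (a + b) = δ a + δ b
  map_smul : ∀ (c : ℂ) (a : B), δ (c • a) = c • δ a
  leibniz : ∀ a b : B, δ (a * b) = δ a * b + a * δ b

/-- divergence `∇·X` of a triple. -/
def divg (d1 d2 d3 : B → B) (X : B × B × B) : B := d1 X.1 + d2 X.2.1 + d3 X.2.2

/-- curl `∇×X` of a triple. -/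
def curl (d1 d2 d3 : B → B) (X : B × B × B) : B × B × B :=
  (d2 X.2.2 - d3 X.2.1, d3 X.1 - d1 X.2.2, d1 X.2.1 - d2 X.1)

/-- gradient `∇a`. -/
def grad (d1 d2 d3 : B → B) (a : B) : B × B × B := (d1 a, d2 a, d3 a)

/-- apply a derivation componentwise to a triple, e.g. `∂₀X`. -/
def dmap (d0 : B → B) (X : B × B × B) : B × B × B := (d0 X.1, d0 X.2.1, d0 X.2.2)

/-- ordered cross product `X×Y` (multiplication from top to bottom). -/
def cross (X Y : B × B × B) : B × B × B :=
  (X.2.1 * Y.2.2 - X.2.2 * Y.2.1, X.2.2 * Y.1 - X.1 * Y.2.2, X.1 * Y.2.1 - X.2.1 * Y.1)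

/-- componentwise commutator `[a,X] = (aX_k - X_k a)_k`. -/
def commS (a : B) (X : B × B × B) : B × B × B :=
  (a * X.1 - X.1 * a, a * X.2.1 - X.2.1 * a, a * X.2.2 - X.2.2 * a)

/-- componentwise commutator `[X,a] = (X_k a - a X_k)_k`. -/
def commR (X : B × B × B) (a : B) : B × B × B :=
  (X.1 * a - a * X.1, X.2.1 * a - a * X.2.1, X.2.2 * a - a * X.2.2)

/-- scalar commutator `[X,Y] = Σ_k (X_k Y_k - Y_k X_k)`. -/
def commV (X Y : B × B × B) : B :=
  (X.1 * Y.1 - Y.1 * X.1) + (X.2.1 * Y.2.1 - Y.2.1 * X.2.1) +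
    (X.2.2 * Y.2.2 - Y.2.2 * X.2.2)

/-- classical part of the electric field: `E = -∂₀A - ∇φ`. -/
def Efield (d0 d1 d2 d3 : B → B) (φ : B) (A : B × B × B) : B × B × B :=
  -dmap d0 A - grad d1 d2 d3 φ

/-- classical part of the magnetic field: `Bf = ∇×A`. -/
def Bfield (d1 d2 d3 : B → B) (A : B × B × B) : B × B × B := curl d1 d2 d3 A

/-- the noncommutative electric field `D = E + i[φ,A]`. -/
def Dfield (d0 d1 d2 d3 : B → B) (φ : B) (A : B × B × B) : B × B × B :=
  Efield d0 d1 d2 d3 φ A + Complex.I • commS φ A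

/-- the noncommutative magnetic field `H = Bf + i(A×A)`. -/
def Hfield (d1 d2 d3 : B → B) (A : B × B × B) : B × B × B :=
  Bfield d1 d2 d3 A + Complex.I • cross A A

end NC


namespace NC

namespace TwoPhoton

variable {B : Type*} [Ring B] [Algebra ℂ B]

/-- `K := [φ^m,A^e] + [φ^e,A^m]` (componentwise commutators). -/
def Kv (φe φm : B) (Ae Am : B × B × B) : B × B × B := commS φm Ae + commS φe Am

/-- `C := A^e×A^m + A^m×A^e`. -/
def Cv (Ae Am : B × B × B) : B × B × B := cross Ae Am + cross Am Ae

/-- `E^e := -∂₀A^e - ∇φ^e`. -/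
def Ee (d0 d1 d2 d3 : B → B) (φe : B) (Ae : B × B × B) : B × B × B :=
  -dmap d0 Ae - grad d1 d2 d3 φe

/-- `B^e := ∇×A^e`. -/
def Be (d1 d2 d3 : B → B) (Ae : B × B × B) : B × B × B := curl d1 d2 d3 Ae

/-- `B^m := -∂₀A^m - ∇φ^m`. -/
def Bm (d0 d1 d2 d3 : B → B) (φm : B) (Am : B × B × B) : B × B × B :=
  -dmap d0 Am - grad d1 d2 d3 φm

/-- `E^m := ∇×A^m`. -/
def Em (d1 d2 d3 : B → B) (Am : B × B × B) : B × B × B := curl d1 d2 d3 Am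

/-- `D^e := E^e + iK`. -/
def De (d0 d1 d2 d3 : B → B) (φe : B) (Ae : B × B × B) (φm : B) (Am : B × B × B) :
    B × B × B :=
  Ee d0 d1 d2 d3 φe Ae + Complex.I • Kv φe φm Ae Am

/-- `H^e := B^e + iC`. -/
def He (d1 d2 d3 : B → B) (Ae Am : B × B × B) : B × B × B :=
  Be d1 d2 d3 Ae + Complex.I • Cv Ae Am

/-- `H^m := B^m + iK`. -/
def Hm (d0 d1 d2 d3 : B → B) (φe : B) (Ae : B × B × B) (φm : B) (Am : B × B × B) :
    B × B × B :=
  Bm d0 d1 d2 d3 φm Am + Complex.I • Kv φe φm Ae Am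

/-- `D^m := E^m + iC`. -/
def Dm (d1 d2 d3 : B → B) (Ae Am : B × B × B) : B × B × B :=
  Em d1 d2 d3 Am + Complex.I • Cv Ae Am

end TwoPhoton

/-! Each field is a classical part plus `i` times a commutator part, and the same
commutator parts `K`, `C` occur in both equations. The classical parts obey Faraday's law
`∇×(-∂₀A - ∇φ) + ∂₀(∇×A) = 0` because the derivations commute. For the commutator parts the
Leibniz rule gives `∇×[a,X] = [a,∇×X] + ∇a×X + X×∇a` and `∂₀(X×Y) = ∂₀X×Y + X×∂₀Y`; collecting
`∂₀A + ∇φ` inside the cross products produces the field strengths `E^e`, `B^m` of `-j`. -/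

section AddGroup

variable {G H : Type*} [AddGroup G] [AddGroup H] {f : G → H}

lemma map_neg_of_map_add (h : ∀ a b, f (a + b) = f a + f b) (a : G) : f (-a) = -f a :=
  (AddMonoidHom.mk' f h).map_neg a

lemma map_sub_of_map_add (h : ∀ a b, f (a + b) = f a + f b) (a b : G) :
    f (a - b) = f a - f b :=
  (AddMonoidHom.mk' f h).map_sub a b

end AddGroup

section Ring

variable {B : Type*} [Ring B]

lemma cross_add_left (X Y Z : B × B × B) : cross (X + Y) Z = cross X Z + cross Y Z := by
  ext <;> simp only [cross, Prod.fst_add, Prod.snd_add] <;> noncomm_ring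

lemma cross_add_right (X Y Z : B × B × B) : cross X (Y + Z) = cross X Y + cross X Z := by
  ext <;> simp only [cross, Prod.fst_add, Prod.snd_add] <;> noncomm_ring

lemma cross_neg_left (X Y : B × B × B) : cross (-X) Y = -cross X Y :=
  map_neg_of_map_add (f := (cross · Y)) (fun X Z => cross_add_left X Z Y) X

lemma cross_neg_right (X Y : B × B × B) : cross X (-Y) = -cross X Y :=
  map_neg_of_map_add (cross_add_right X) Y

lemma cross_sub_left (X Y Z : B × B × B) : cross (X - Y) Z = cross X Z - cross Y Z :=
  map_sub_of_map_add (f := (cross · Z)) (fun X Y => cross_add_left X Y Z) X Y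

lemma cross_sub_right (X Y Z : B × B × B) : cross X (Y - Z) = cross X Y - cross X Z :=
  map_sub_of_map_add (cross_add_right X) Y Z

lemma curl_grad {d1 d2 d3 : B → B} (h12 : ∀ x, d1 (d2 x) = d2 (d1 x))
    (h13 : ∀ x, d1 (d3 x) = d3 (d1 x)) (h23 : ∀ x, d2 (d3 x) = d3 (d2 x)) (a : B) :
    curl d1 d2 d3 (grad d1 d2 d3 a) = 0 := by
  ext <;> simp [curl, grad, h12, h13, h23]

end Ring

section Algebra

variable {B : Type*} [Ring B] [Algebra ℂ B] {d0 d1 d2 d3 : B → B}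

lemma IsDer.map_sub {δ : B → B} (h : IsDer δ) (a b : B) : δ (a - b) = δ a - δ b :=
  map_sub_of_map_add h.map_add a b

lemma dmap_add (h0 : IsDer d0) (X Y : B × B × B) :
    dmap d0 (X + Y) = dmap d0 X + dmap d0 Y := by
  ext <;> simp only [dmap, Prod.fst_add, Prod.snd_add, h0.map_add]

lemma dmap_smul (h0 : IsDer d0) (c : ℂ) (X : B × B × B) : dmap d0 (c • X) = c • dmap d0 X := by
  ext <;> simp only [dmap, Prod.smul_fst, Prod.smul_snd, h0.map_smul]

lemma dmap_cross (h0 : IsDer d0) (X Y : B × B × B) :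
    dmap d0 (cross X Y) = cross (dmap d0 X) Y + cross X (dmap d0 Y) := by
  ext <;> simp only [dmap, cross, Prod.fst_add, Prod.snd_add, h0.map_sub, h0.leibniz] <;>
    noncomm_ring

lemma curl_add (h1 : IsDer d1) (h2 : IsDer d2) (h3 : IsDer d3) (X Y : B × B × B) :
    curl d1 d2 d3 (X + Y) = curl d1 d2 d3 X + curl d1 d2 d3 Y := by
  ext <;> simp only [curl, Prod.fst_add, Prod.snd_add, h1.map_add, h2.map_add, h3.map_add] <;>
    abel

lemma curl_neg (h1 : IsDer d1) (h2 : IsDer d2) (h3 : IsDer d3) (X : B × B × B) :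
    curl d1 d2 d3 (-X) = -curl d1 d2 d3 X :=
  map_neg_of_map_add (curl_add h1 h2 h3) X

lemma curl_sub (h1 : IsDer d1) (h2 : IsDer d2) (h3 : IsDer d3) (X Y : B × B × B) :
    curl d1 d2 d3 (X - Y) = curl d1 d2 d3 X - curl d1 d2 d3 Y :=
  map_sub_of_map_add (curl_add h1 h2 h3) X Y

lemma curl_smul (h1 : IsDer d1) (h2 : IsDer d2) (h3 : IsDer d3) (c : ℂ) (X : B × B × B) :
    curl d1 d2 d3 (c • X) = c • curl d1 d2 d3 X := by
  ext <;> simp only [curl, Prod.smul_fst, Prod.smul_snd, h1.map_smul, h2.map_smul,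
    h3.map_smul, smul_sub]

lemma curl_commS (h1 : IsDer d1) (h2 : IsDer d2) (h3 : IsDer d3) (a : B) (X : B × B × B) :
    curl d1 d2 d3 (commS a X) =
      commS a (curl d1 d2 d3 X) + cross (grad d1 d2 d3 a) X + cross X (grad d1 d2 d3 a) := by
  ext <;> simp only [curl, commS, cross, grad, Prod.fst_add, Prod.snd_add, h1.map_sub,
    h2.map_sub, h3.map_sub, h1.leibniz, h2.leibniz, h3.leibniz] <;> noncomm_ring

lemma curl_dmap (h0 : IsDer d0) (h01 : ∀ x, d0 (d1 x) = d1 (d0 x))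
    (h02 : ∀ x, d0 (d2 x) = d2 (d0 x)) (h03 : ∀ x, d0 (d3 x) = d3 (d0 x)) (X : B × B × B) :
    curl d1 d2 d3 (dmap d0 X) = dmap d0 (curl d1 d2 d3 X) := by
  ext <;> simp only [curl, dmap, h01, h02, h03, h0.map_sub]

lemma curl_add_smul_add_dmap_add_smul (h0 : IsDer d0) (h1 : IsDer d1) (h2 : IsDer d2)
    (h3 : IsDer d3) (c : ℂ) (E K H C : B × B × B) :
    curl d1 d2 d3 (E + c • K) + dmap d0 (H + c • C) =
      curl d1 d2 d3 E + dmap d0 H + c • (curl d1 d2 d3 K + dmap d0 C) := by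
  rw [curl_add h1 h2 h3, curl_smul h1 h2 h3, dmap_add h0, dmap_smul h0, smul_add]
  abel

lemma curl_Efield_add_dmap_Bfield (h0 : IsDer d0) (h1 : IsDer d1) (h2 : IsDer d2)
    (h3 : IsDer d3) (h01 : ∀ x, d0 (d1 x) = d1 (d0 x)) (h02 : ∀ x, d0 (d2 x) = d2 (d0 x))
    (h03 : ∀ x, d0 (d3 x) = d3 (d0 x)) (h12 : ∀ x, d1 (d2 x) = d2 (d1 x))
    (h13 : ∀ x, d1 (d3 x) = d3 (d1 x)) (h23 : ∀ x, d2 (d3 x) = d3 (d2 x))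
    (φ : B) (A : B × B × B) :
    curl d1 d2 d3 (Efield d0 d1 d2 d3 φ A) + dmap d0 (Bfield d1 d2 d3 A) = 0 := by
  rw [Efield, Bfield, curl_sub h1 h2 h3, curl_neg h1 h2 h3, curl_dmap h0 h01 h02 h03,
    curl_grad h12 h13 h23]
  abel

end Algebra

namespace TwoPhoton

section

variable {B : Type*} [Ring B] [Algebra ℂ B] {d0 d1 d2 d3 : B → B}

lemma curl_Kv_add_dmap_Cv (h0 : IsDer d0) (h1 : IsDer d1) (h2 : IsDer d2) (h3 : IsDer d3)
    (φe φm : B) (Ae Am : B × B × B) :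
    curl d1 d2 d3 (Kv φe φm Ae Am) + dmap d0 (Cv Ae Am) =
      commS φm (Be d1 d2 d3 Ae) + commS φe (Em d1 d2 d3 Am) -
        (cross (Ee d0 d1 d2 d3 φe Ae) Am + cross Am (Ee d0 d1 d2 d3 φe Ae) +
          cross (Bm d0 d1 d2 d3 φm Am) Ae + cross Ae (Bm d0 d1 d2 d3 φm Am)) := by
  simp only [Kv, Cv, Ee, Bm, Be, Em, curl_add h1 h2 h3, curl_commS h1 h2 h3, dmap_add h0,
    dmap_cross h0, cross_sub_left, cross_sub_right, cross_neg_left, cross_neg_right]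
  abel

end

/-- **Two-field noncommutative Faraday/Ampère-type identities** from the Bianchi
identity of the two-photon model: for every pair of gauge potentials,
`∇×D^e + ∂₀H^e = -j` and `∇×H^m + ∂₀D^m = -j`, where
`-j := i[φ^m,B^e] + i[φ^e,E^m] - i(E^e×A^m + A^m×E^e + B^m×A^e + A^e×B^m)`. -/
theorem nc_two_field_faraday_ampere {B : Type*} [Ring B] [Algebra ℂ B]
    (d0 d1 d2 d3 : B → B)
    (h0 : IsDer d0) (h1 : IsDer d1) (h2 : IsDer d2) (h3 : IsDer d3)
    (hcomm : ∀ δ ∈ [d0, d1, d2, d3], ∀ δ' ∈ [d0, d1, d2, d3], ∀ x : B,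
      δ (δ' x) = δ' (δ x))
    (φe φm : B) (Ae Am : B × B × B) :
    curl d1 d2 d3 (De d0 d1 d2 d3 φe Ae φm Am) +
        dmap d0 (He d1 d2 d3 Ae Am) =
      Complex.I • commS φm (Be d1 d2 d3 Ae) +
        Complex.I • commS φe (Em d1 d2 d3 Am) -
        Complex.I • (cross (Ee d0 d1 d2 d3 φe Ae) Am +
          cross Am (Ee d0 d1 d2 d3 φe Ae) +
          cross (Bm d0 d1 d2 d3 φm Am) Ae +
          cross Ae (Bm d0 d1 d2 d3 φm Am)) ∧
    curl d1 d2 d3 (Hm d0 d1 d2 d3 φe Ae φm Am) +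
        dmap d0 (Dm d1 d2 d3 Ae Am) =
      Complex.I • commS φm (Be d1 d2 d3 Ae) +
        Complex.I • commS φe (Em d1 d2 d3 Am) -
        Complex.I • (cross (Ee d0 d1 d2 d3 φe Ae) Am +
          cross Am (Ee d0 d1 d2 d3 φe Ae) +
          cross (Bm d0 d1 d2 d3 φm Am) Ae +
          cross Ae (Bm d0 d1 d2 d3 φm Am)) := by
  have faraday (φ : B) (A : B × B × B) :
      curl d1 d2 d3 (Efield d0 d1 d2 d3 φ A) + dmap d0 (Bfield d1 d2 d3 A) = 0 :=
    curl_Efield_add_dmap_Bfield h0 h1 h2 h3 (hcomm _ (by simp) _ (by simp))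
      (hcomm _ (by simp) _ (by simp)) (hcomm _ (by simp) _ (by simp))
      (hcomm _ (by simp) _ (by simp)) (hcomm _ (by simp) _ (by simp))
      (hcomm _ (by simp) _ (by simp)) φ A
  have split := curl_add_smul_add_dmap_add_smul h0 h1 h2 h3 Complex.I
  rw [← smul_add, ← smul_sub, ← curl_Kv_add_dmap_Cv h0 h1 h2 h3]
  exact ⟨by rw [De, He, split]; exact add_eq_right.2 (faraday φe Ae),
    by rw [Hm, Dm, split]; exact add_eq_right.2 (faraday φm Am)⟩

end TwoPhoton

end NC
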